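/- Let η ∈ (0,1/4) and M > 0. There exist positive constants δ_0 (depending on η and M) and C_4 (depending on M) such that for every δ with |δ| < δ_0, letting Y be the solution of Y_τ = f(Y) + δ with Y(0,ξ) = ξ: if ξ ∈ [1-η, 1+M] then Y(τ,ξ) ∈ [1-η, 1+M] for all τ > 0 and |A(τ,ξ)| ≤ C_4 τ for all τ > 0, where A(τ,ξ) := (f'(Y(τ,ξ)) - f'(ξ))/(f(ξ)+δ); likewise, if ξ ∈ [-M, η] then Y(τ,ξ) ∈ [-M, η] for all τ > 0 and |A(τ,ξ)| ≤ C_4 τ for all τ > 0. -/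

import Mathlib

noncomputable def f (u : ℝ) : ℝ := u * (1 - u) * (u - 1/2)

lemma hasDerivAt_f (u : ℝ) : HasDerivAt f (-3*u^2 + 3*u - 1/2) u := by
  have h : HasDerivAt (fun u : ℝ => u * (1 - u) * (u - 1/2)) (-3*u^2+3*u-1/2) u := by
    have := (((hasDerivAt_id u).mul ((hasDerivAt_const u (1:ℝ)).sub (hasDerivAt_id u))).mul
      ((hasDerivAt_id u).sub (hasDerivAt_const u (1/2:ℝ))))
    exact this.congr_deriv (by simp; ring)
  exact h

lemma deriv_f_eq (u : ℝ) : deriv f u = -3*u^2 + 3*u - 1/2 := (hasDerivAt_f u).deriv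

lemma f_flip (u : ℝ) : f (1 - u) = - f u := by unfold f; ring

lemma cont_f : Continuous f := by unfold f; fun_prop

-- no-crossing lemmas
lemma up_lemma {u g : ℝ → ℝ} (hu : Continuous u)
    (hud : ∀ t, 0 < t → HasDerivAt u (g (u t)) t)
    {q : ℝ} (hq : ∀ x, q < x → g x < 0) (h0 : u 0 ≤ q) :
    ∀ t, 0 ≤ t → u t ≤ q := by
  intro t ht
  by_contra hcon
  push_neg at hcon
  have ht0 : 0 < t := by
    rcases ht.lt_or_eq with h | h
    · exact h
    · exact absurd h0 (by rw [← h] at hcon; exact not_le.2 hcon)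
  set S : Set ℝ := {s | s ∈ Set.Icc 0 t ∧ u s ≤ q} with hS
  have hSclosed : IsClosed S := (isClosed_Icc).inter (isClosed_le hu continuous_const)
  have hSne : S.Nonempty := ⟨0, ⟨le_refl 0, ht0.le⟩, h0⟩
  have hSbdd : BddAbove S := ⟨t, fun s hs => hs.1.2⟩
  set t0 := sSup S with ht0def
  have ht0S : t0 ∈ S := hSclosed.csSup_mem hSne hSbdd
  have ht0t : t0 < t := lt_of_le_of_ne ht0S.1.2 (fun h => by rw [h] at ht0S; exact absurd ht0S.2 (not_le.2 hcon))
  have hmid : ∀ s, t0 < s → s ≤ t → q < u s := by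
    intro s hs1 hs2
    by_contra hq2
    push_neg at hq2
    have : s ∈ S := ⟨⟨ht0S.1.1.trans hs1.le, hs2⟩, hq2⟩
    exact absurd (le_csSup hSbdd this) (not_le.2 hs1)
  obtain ⟨c, hc, hslope⟩ := exists_hasDerivAt_eq_slope u (fun s => g (u s)) ht0t
    (hu.continuousOn)
    (fun x hx => hud x (lt_of_le_of_lt ht0S.1.1 hx.1))
  have hgc : g (u c) < 0 := hq _ (hmid c hc.1 hc.2.le)
  have : (u t - u t0) / (t - t0) < 0 := hslope ▸ hgc
  have h2 : u t - u t0 < 0 := by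
    rcases (div_neg_iff).1 this with ⟨h, h'⟩ | ⟨h, h'⟩
    · linarith [sub_pos.2 ht0t]
    · exact h
  linarith [ht0S.2, hcon]

lemma low_lemma {u g : ℝ → ℝ} (hu : Continuous u)
    (hud : ∀ t, 0 < t → HasDerivAt u (g (u t)) t)
    {p p0 : ℝ} (hpp : p0 < p) (hg : ∀ x, p0 ≤ x → x < p → 0 < g x) (h0 : p ≤ u 0) :
    ∀ t, 0 ≤ t → p ≤ u t := by
  intro t ht
  by_contra hcon
  push_neg at hcon
  have ht0 : 0 < t := by
    rcases ht.lt_or_eq with h | h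
    · exact h
    · exact absurd h0 (by rw [← h] at hcon; exact not_le.2 hcon)
  set S : Set ℝ := {s | s ∈ Set.Icc 0 t ∧ p ≤ u s} with hS
  have hSclosed : IsClosed S := (isClosed_Icc).inter (isClosed_le continuous_const hu)
  have hSne : S.Nonempty := ⟨0, ⟨le_refl 0, ht0.le⟩, h0⟩
  have hSbdd : BddAbove S := ⟨t, fun s hs => hs.1.2⟩
  set t0 := sSup S with ht0def
  have ht0S : t0 ∈ S := hSclosed.csSup_mem hSne hSbdd
  have ht0t : t0 < t := lt_of_le_of_ne ht0S.1.2 (fun h => by rw [h] at ht0S; exact absurd ht0S.2 (not_le.2 hcon))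
  have hmid : ∀ s, t0 < s → s ≤ t → u s < p := by
    intro s hs1 hs2
    by_contra hq2
    push_neg at hq2
    have : s ∈ S := ⟨⟨ht0S.1.1.trans hs1.le, hs2⟩, hq2⟩
    exact absurd (le_csSup hSbdd this) (not_le.2 hs1)
  -- does u dip to p0 in (t0, t]?
  by_cases hdip : ∃ s, s ∈ Set.Icc t0 t ∧ u s ≤ p0
  · set T : Set ℝ := {s | s ∈ Set.Icc t0 t ∧ u s ≤ p0} with hT
    have hTclosed : IsClosed T := (isClosed_Icc).inter (isClosed_le hu continuous_const)
    have hTne : T.Nonempty := hdip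
    have hTbdd : BddBelow T := ⟨t0, fun s hs => hs.1.1⟩
    set t2 := sInf T with ht2def
    have ht2T : t2 ∈ T := hTclosed.csInf_mem hTne hTbdd
    have ht02 : t0 < t2 := by
      rcases ht2T.1.1.lt_or_eq with h | h
      · exact h
      · exfalso; rw [← h] at ht2T; linarith [ht2T.2, ht0S.2]
    have hbetween : ∀ s, t0 < s → s < t2 → p0 < u s := by
      intro s hs1 hs2
      by_contra hb
      push_neg at hb
      have : s ∈ T := ⟨⟨hs1.le, hs2.le.trans ht2T.1.2⟩, hb⟩
      exact absurd (csInf_le hTbdd this) (not_le.2 hs2)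
    obtain ⟨c, hc, hslope⟩ := exists_hasDerivAt_eq_slope u (fun s => g (u s)) ht02
      (hu.continuousOn)
      (fun x hx => hud x (lt_of_le_of_lt ht0S.1.1 hx.1))
    have hucp : u c < p := hmid c hc.1 (hc.2.le.trans ht2T.1.2)
    have hgc : 0 < g (u c) := hg _ (hbetween c hc.1 hc.2).le hucp
    have : 0 < (u t2 - u t0) / (t2 - t0) := hslope ▸ hgc
    have h2 : 0 < u t2 - u t0 := by
      rcases (div_pos_iff).1 this with ⟨h, h'⟩ | ⟨h, h'⟩
      · exact h
      · linarith [sub_pos.2 ht02]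
    linarith [ht0S.2, ht2T.2]
  · push_neg at hdip
    obtain ⟨c, hc, hslope⟩ := exists_hasDerivAt_eq_slope u (fun s => g (u s)) ht0t
      (hu.continuousOn)
      (fun x hx => hud x (lt_of_le_of_lt ht0S.1.1 hx.1))
    have hucp : u c < p := hmid c hc.1 hc.2.le
    have hgc : 0 < g (u c) := hg _ (hdip c ⟨hc.1.le, hc.2.le⟩).le hucp
    have : 0 < (u t - u t0) / (t - t0) := hslope ▸ hgc
    have h2 : 0 < u t - u t0 := by
      rcases (div_pos_iff).1 this with ⟨h, h'⟩ | ⟨h, h'⟩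
      · exact h
      · linarith [sub_pos.2 ht0t]
    linarith [ht0S.2, hcon]

lemma lip_f {B x y : ℝ} (hB : 2 ≤ B) (hx : |x| ≤ B) (hy : |y| ≤ B) :
    |f x - f y| ≤ (9*B^2) * |x - y| := by
  have hid : f x - f y = (x - y) * (-(x^2+x*y+y^2) + 3/2*(x+y) - 1/2) := by unfold f; ring
  rw [hid, abs_mul, mul_comm]
  have h1 : |(-(x^2+x*y+y^2) + 3/2*(x+y) - 1/2)| ≤ 9*B^2 := by
    rw [abs_le] at *
    constructor <;> nlinarith [sq_nonneg (x+y), sq_nonneg (x-y), sq_nonneg B]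
  exact mul_le_mul_of_nonneg_right h1 (abs_nonneg _)

lemma lip_f' {B x y : ℝ} (hB : 2 ≤ B) (hx : |x| ≤ B) (hy : |y| ≤ B) :
    |deriv f x - deriv f y| ≤ (9*B^2) * |x - y| := by
  rw [deriv_f_eq, deriv_f_eq]
  have hid : (-3*x^2 + 3*x - 1/2) - (-3*y^2 + 3*y - 1/2) = (x - y) * (3 - 3*(x+y)) := by ring
  rw [hid, abs_mul, mul_comm]
  have h1 : |3 - 3*(x+y)| ≤ 9*B^2 := by
    rw [abs_le] at *
    constructor <;> nlinarith [sq_nonneg B]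
  exact mul_le_mul_of_nonneg_right h1 (abs_nonneg _)

-- f x ≥ 5/64 (1-x) for x ∈ [5/8, 1]
lemma f_lb {x : ℝ} (h1 : 5/8 ≤ x) (h2 : x ≤ 1) : 5/64 * (1 - x) ≤ f x := by
  unfold f
  have k : 5/64 ≤ x*(x-1/2) := by nlinarith
  nlinarith [mul_nonneg (sub_nonneg.2 h2) (sub_nonneg.2 k)]

-- on [7/8,9/8], f decreasing with slope ≤ -11/64
lemma f_slope {x y : ℝ} (hx1 : 7/8 ≤ x) (hy2 : y ≤ 9/8) (hxy : x ≤ y) :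
    11/64 * (y - x) ≤ f x - f y := by
  have hid : f x - f y = (y - x) * (x^2+x*y+y^2 - 3/2*(x+y) + 1/2) := by unfold f; ring
  rw [hid]
  have hy1 : 7/8 ≤ y := hx1.trans hxy
  have hx2 : x ≤ 9/8 := hxy.trans hy2
  nlinarith [sq_nonneg (x-y), mul_nonneg (sub_nonneg.2 hx1) (sub_nonneg.2 hy1)]

-- f x ≤ -45/512 for x ≥ 9/8
lemma f_ub {x : ℝ} (h : 9/8 ≤ x) : f x ≤ -(45/512) := by
  unfold f
  nlinarith [mul_nonneg (sub_nonneg.2 h) (sub_nonneg.2 h), sq_nonneg (x-9/8)]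

-- f x ≤ -(x-1)/2 for x ∈ [1, ∞) ... need for c < b
lemma f_ub2 {x : ℝ} (h : 1 ≤ x) : f x ≤ -((x-1)/2) := by
  unfold f
  have k : 1/2 ≤ x*(x-1/2) := by nlinarith
  nlinarith [mul_nonneg (sub_nonneg.2 h) (sub_nonneg.2 k)]

set_option maxHeartbeats 2000000 in
lemma core (η M : ℝ) (hη : η ∈ Set.Ioo (0:ℝ) (1/4)) (hM : 0 < M) :
    ∃ δ0 > (0:ℝ), ∃ C4 > (0:ℝ), ∀ δ : ℝ, |δ| < δ0 →
      ∀ Y : ℝ → ℝ → ℝ,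
        ContDiff ℝ (⊤ : ℕ∞) (fun p : ℝ × ℝ => Y p.1 p.2) →
        (∀ ξ : ℝ, ∀ τ : ℝ, 0 < τ → HasDerivAt (fun t => Y t ξ) (f (Y τ ξ) + δ) τ) →
        (∀ ξ : ℝ, Y 0 ξ = ξ) →
        ∀ ξ ∈ Set.Icc (1 - η) (1 + M), ∀ τ : ℝ, 0 < τ →
          Y τ ξ ∈ Set.Icc (1 - η) (1 + M) ∧
          |(deriv f (Y τ ξ) - deriv f ξ) / (f ξ + δ)| ≤ C4 * τ := by
  obtain ⟨hη0, hη4⟩ := hη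
  set B := M + 2 with hBdef
  have hB2 : 2 ≤ B := by rw [hBdef]; linarith
  set K := 9*B^2 with hK
  have hKpos : 0 < K := by positivity
  set C1 := 210*B with hC1
  have hC1pos : 0 < C1 := by positivity
  have hC1big : 420 ≤ C1 := by rw [hC1]; linarith
  refine ⟨min (min (5*η/64) (M/4)) (5/1024), by positivity, K * (Real.exp K + C1), by positivity, ?_⟩
  intro δ hδ Y hYsm hY' hY0 ξ hξ τ hτ
  have hδ1 : |δ| < 5*η/64 := lt_of_lt_of_le hδ ((min_le_left _ _).trans (min_le_left _ _))
  have hδ2 : |δ| < M/4 := lt_of_lt_of_le hδ ((min_le_left _ _).trans (min_le_right _ _))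
  have hδ3 : |δ| < 5/1024 := lt_of_lt_of_le hδ (min_le_right _ _)
  rw [abs_lt] at hδ1 hδ2 hδ3
  obtain ⟨g, hg⟩ : ∃ g : ℝ → ℝ, g = fun x => f x + δ := ⟨_, rfl⟩
  obtain ⟨u, hudef⟩ : ∃ u : ℝ → ℝ, u = fun t => Y t ξ := ⟨_, rfl⟩
  have huτ : ∀ t, u t = Y t ξ := by intro t; rw [hudef]
  have hu1 : ContDiff ℝ (⊤ : ℕ∞) u := by
    rw [hudef]
    exact hYsm.comp ((contDiff_id (E := ℝ)).prodMk contDiff_const)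
  have hu_cont : Continuous u := hu1.continuous
  have hud : ∀ t, 0 < t → HasDerivAt u (g (u t)) t := by
    intro t ht
    simp only [hudef, hg]
    exact hY' ξ t ht
  have hu0 : u 0 = ξ := (huτ 0).trans (hY0 ξ)
  have haξ : 1 - η ≤ ξ := hξ.1
  have hξb : ξ ≤ 1 + M := hξ.2
  -- root c of g in [7/8, 9/8]
  have hgcont : Continuous g := by rw [hg]; exact cont_f.add continuous_const
  have hf78 : f (7/8) = 21/512 := by unfold f; norm_num
  have hg78 : 0 < g (7/8) := by simp only [hg]; rw [hf78]; linarith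
  have hg98 : g (9/8) < 0 := by
    have := f_ub (le_refl (9/8 : ℝ))
    simp only [hg]; linarith
  obtain ⟨c, hcmem, hgc0⟩ : ∃ c ∈ Set.Icc (7/8:ℝ) (9/8), g c = 0 := by
    have h0 : (0:ℝ) ∈ Set.Icc (g (9/8)) (g (7/8)) := ⟨hg98.le, hg78.le⟩
    obtain ⟨c, hc, hc0⟩ := intermediate_value_Icc' (by norm_num : (7:ℝ)/8 ≤ 9/8) hgcont.continuousOn h0
    exact ⟨c, hc, hc0⟩
  have hfc : f c = -δ := by simp only [hg] at hgc0; linarith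
  -- sign of g
  have hgpos : ∀ x, 5/8 ≤ x → x < c → 0 < g x := by
    intro x h1 h2
    by_cases h3 : x ≤ 7/8
    · have := f_lb h1 (by linarith : x ≤ 1)
      simp only [hg]; nlinarith
    · push_neg at h3
      have hs := f_slope h3.le hcmem.2 h2.le
      have he : g x = f x - f c := by simp only [hg]; rw [hfc]; ring
      rw [he]; linarith
  have hgneg : ∀ x, c < x → g x < 0 := by
    intro x h2
    by_cases h3 : x ≤ 9/8
    · have hs := f_slope hcmem.1 h3 h2.le
      have he : g x = -(f c - f x) := by simp only [hg]; rw [hfc]; ring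
      rw [he]; linarith
    · push_neg at h3
      have := f_ub h3.le
      simp only [hg]; linarith
  -- a < c < b
  have hac : 1 - η < c := by
    by_contra h
    push_neg at h
    have h1 : c ≤ 1 := by linarith
    have h2 : 5/8 ≤ c := by linarith [hcmem.1]
    have := f_lb h2 h1
    have h3 : η ≤ 1 - c := by linarith
    nlinarith
  have hcb : c < 1 + M := by
    by_contra h
    push_neg at h
    have h1 : 1 ≤ c := by linarith
    have := f_ub2 h1
    have h4 : M ≤ c - 1 := by linarith
    linarith
  -- invariance
  have hc58 : (5:ℝ)/8 < min ξ c := lt_min (by linarith) (by linarith [hcmem.1])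
  have hup : ∀ t, 0 ≤ t → u t ≤ max ξ c :=
    up_lemma hu_cont hud (fun x hx => hgneg x (lt_of_le_of_lt (le_max_right ξ c) hx))
      (by rw [hu0]; exact le_max_left _ _)
  have hlow : ∀ t, 0 ≤ t → min ξ c ≤ u t :=
    low_lemma hu_cont hud hc58
      (fun x hx1 hx2 => hgpos x hx1 (lt_of_lt_of_le hx2 (min_le_right _ _)))
      (by rw [hu0]; exact min_le_left _ _)
  have hmem : ∀ t, 0 ≤ t → u t ∈ Set.Icc (1-η) (1+M) := by
    intro t ht
    exact ⟨le_trans (le_min haξ hac.le) (hlow t ht), le_trans (hup t ht) (max_le hξb hcb.le)⟩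
  have habs : ∀ t, 0 ≤ t → |u t - ξ| ≤ |c - ξ| := by
    intro t ht
    have h1 := hlow t ht
    have h2 := hup t ht
    rcases le_total ξ c with h | h
    · rw [min_eq_left h] at h1; rw [max_eq_right h] at h2
      rw [abs_of_nonneg (by linarith : (0:ℝ) ≤ c - ξ), abs_le]
      constructor <;> linarith
    · rw [min_eq_right h] at h1; rw [max_eq_left h] at h2
      rw [abs_of_nonpos (by linarith : c - ξ ≤ 0), abs_le]
      constructor <;> linarith
  -- key: |c - ξ| ≤ C1 * |g ξ|
  have hBb : 1 + M ≤ B := by rw [hBdef]; linarith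
  have hkey : |c - ξ| ≤ C1 * |g ξ| := by
    by_cases h78 : 7/8 ≤ ξ
    · by_cases h98 : ξ ≤ 9/8
      · have hgξ : g ξ = f ξ - f c := by simp only [hg]; rw [hfc]; ring
        rcases le_total ξ c with h | h
        · have hs := f_slope h78 hcmem.2 h
          rw [abs_of_nonneg (by linarith : (0:ℝ) ≤ c - ξ), hgξ,
            abs_of_nonneg (by linarith : (0:ℝ) ≤ f ξ - f c)]
          nlinarith
        · have hs := f_slope hcmem.1 h98 h
          rw [abs_of_nonpos (by linarith : c - ξ ≤ 0), hgξ,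
            abs_of_nonpos (by linarith : f ξ - f c ≤ 0)]
          nlinarith
      · push_neg at h98
        have hfξ := f_ub h98.le
        have h1 : g ξ ≤ -(5/1024) := by simp only [hg]; linarith
        have h2 : 5/1024 ≤ |g ξ| := by
          rw [abs_of_nonpos (show g ξ ≤ 0 by linarith)]; linarith
        have h3 : |c - ξ| ≤ B := by
          rw [abs_of_nonpos (by linarith [hcmem.2] : c - ξ ≤ 0)]
          linarith [hcmem.1]
        calc |c - ξ| ≤ B := h3
          _ ≤ C1 * (5/1024) := by rw [hC1]; linarith
          _ ≤ C1 * |g ξ| := by nlinarith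
    · push_neg at h78
      have h58 : 5/8 ≤ ξ := by linarith
      have hfξ := f_lb h58 (by linarith : ξ ≤ 1)
      have h1 : 5/1024 ≤ g ξ := by simp only [hg]; nlinarith
      have h2 : 5/1024 ≤ |g ξ| := le_trans h1 (le_abs_self _)
      have h3 : |c - ξ| ≤ B := by
        rw [abs_of_nonneg (by linarith [hcmem.1] : (0:ℝ) ≤ c - ξ)]
        linarith [hcmem.2]
      calc |c - ξ| ≤ B := h3
        _ ≤ C1 * (5/1024) := by rw [hC1]; linarith
        _ ≤ C1 * |g ξ| := by nlinarith
  -- derivative at 0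
  have hu_diff : Differentiable ℝ u := hu1.differentiable (by simp)
  have hderiv_cont : Continuous (deriv u) := hu1.continuous_deriv (by simp)
  have hd0 : deriv u 0 = g ξ := by
    have h1 : Filter.Tendsto (deriv u) (nhdsWithin 0 (Set.Ioi 0)) (nhds (deriv u 0)) :=
      (hderiv_cont.tendsto 0).mono_left nhdsWithin_le_nhds
    have h2 : Filter.Tendsto (fun t => g (u t)) (nhdsWithin 0 (Set.Ioi 0)) (nhds (g (u 0))) :=
      ((hgcont.comp hu_cont).tendsto 0).mono_left nhdsWithin_le_nhds
    have h3 : deriv u =ᶠ[nhdsWithin 0 (Set.Ioi 0)] fun t => g (u t) := by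
      filter_upwards [self_mem_nhdsWithin] with t ht
      exact (hud t ht).deriv
    have h4 := tendsto_nhds_unique (h1.congr' h3) h2
    rw [hu0] at h4; exact h4
  have hu0' : HasDerivAt u (g ξ) 0 := hd0 ▸ (hu_diff 0).hasDerivAt
  -- abs bounds in [-B, B]
  have hmembd : ∀ x : ℝ, x ∈ Set.Icc (1-η) (1+M) → |x| ≤ B := by
    intro x hx
    rw [abs_le]
    constructor
    · have : (0:ℝ) ≤ 1 - η := by linarith
      linarith [hx.1]
    · linarith [hx.2]
  have hbξ : |ξ| ≤ B := hmembd ξ hξ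
  -- Gronwall
  have hgron : ∀ x ∈ Set.Icc (0:ℝ) τ, ‖u x - ξ‖ ≤ gronwallBound 0 K (|g ξ|) (x - 0) := by
    apply norm_le_gronwallBound_of_norm_deriv_right_le (f' := fun t => g (u t))
      ((hu_cont.sub continuous_const).continuousOn)
    · intro x hx
      rcases hx.1.lt_or_eq with h | h
      · exact ((hud x h).sub_const ξ).hasDerivWithinAt
      · rw [← h, hu0]; exact (hu0'.sub_const ξ).hasDerivWithinAt
    · simp [hu0]
    · intro x hx
      have hbx : |u x| ≤ B := hmembd _ (hmem x hx.1)
      have hlip := lip_f hB2 hbx hbξ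
      have h5 : g (u x) = (f (u x) - f ξ) + g ξ := by simp only [hg]; ring
      rw [Real.norm_eq_abs, Real.norm_eq_abs, h5]
      calc |(f (u x) - f ξ) + g ξ| ≤ |f (u x) - f ξ| + |g ξ| := abs_add_le _ _
        _ ≤ K * |u x - ξ| + |g ξ| := by rw [hK]; linarith
  have hgval : gronwallBound 0 K (|g ξ|) (τ - 0) = |g ξ| / K * (Real.exp (K*τ) - 1) := by
    rw [gronwallBound_of_K_ne_0 hKpos.ne']
    norm_num
  have hgrτ : |u τ - ξ| ≤ |g ξ| / K * (Real.exp (K*τ) - 1) := by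
    have := hgron τ ⟨hτ.le, le_refl τ⟩
    rw [hgval] at this
    simpa [Real.norm_eq_abs] using this
  -- conclusion
  refine ⟨(huτ τ) ▸ hmem τ hτ.le, ?_⟩
  have hnum : |deriv f (Y τ ξ) - deriv f ξ| ≤ K * |u τ - ξ| := by
    rw [← huτ τ]
    exact lip_f' hB2 (hmembd _ (hmem τ hτ.le)) hbξ
  by_cases hD : g ξ = 0
  · have hcξ : |c - ξ| = 0 := by
      rw [hD] at hkey
      simp only [abs_zero, mul_zero] at hkey
      exact le_antisymm hkey (abs_nonneg _)
    have h2 : u τ = ξ := by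
      have h := habs τ hτ.le
      rw [hcξ] at h
      have h4 := abs_nonneg (u τ - ξ)
      have h3 : |u τ - ξ| = 0 := le_antisymm h h4
      rw [abs_eq_zero, sub_eq_zero] at h3
      exact h3
    rw [← huτ τ, h2]
    simp
    positivity
  · have hDpos : 0 < |g ξ| := abs_pos.2 hD
    have hfξδ : f ξ + δ = g ξ := by rw [hg]
    rw [hfξδ, abs_div]
    rw [div_le_iff₀ hDpos]
    rcases le_total τ 1 with hτ1 | hτ1
    · have e1 : (1 - K*τ) * Real.exp (K*τ) ≤ 1 := by
        have ha := Real.add_one_le_exp (-(K*τ))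
        have h2 : Real.exp (-(K*τ)) * Real.exp (K*τ) = 1 := by rw [← Real.exp_add]; simp
        nlinarith [Real.exp_pos (K*τ)]
      have e2 : Real.exp (K*τ) ≤ Real.exp K := Real.exp_le_exp.2 (by nlinarith)
      have hexp : Real.exp (K*τ) - 1 ≤ (K*τ)*Real.exp K := by
        nlinarith [mul_nonneg (mul_nonneg hKpos.le hτ.le) (sub_nonneg.2 e2), Real.exp_pos (K*τ)]
      have e3 : |u τ - ξ| ≤ |g ξ| * τ * Real.exp K := by
        have h6 : |g ξ| / K * (Real.exp (K*τ) - 1) ≤ |g ξ| / K * ((K*τ)*Real.exp K) :=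
          mul_le_mul_of_nonneg_left hexp (by positivity)
        have h7 : |g ξ| / K * ((K*τ)*Real.exp K) = |g ξ| * τ * Real.exp K := by
          field_simp
        linarith [hgrτ]
      calc |deriv f (Y τ ξ) - deriv f ξ| ≤ K * |u τ - ξ| := hnum
        _ ≤ K * (|g ξ| * τ * Real.exp K) := mul_le_mul_of_nonneg_left e3 hKpos.le
        _ ≤ K * (Real.exp K + C1) * τ * |g ξ| := by nlinarith [Real.exp_pos K, mul_nonneg (mul_nonneg hKpos.le hτ.le) (abs_nonneg (g ξ))]
    · have e3 : |u τ - ξ| ≤ C1 * |g ξ| := le_trans (habs τ hτ.le) hkey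
      calc |deriv f (Y τ ξ) - deriv f ξ| ≤ K * |u τ - ξ| := hnum
        _ ≤ K * (C1 * |g ξ|) := mul_le_mul_of_nonneg_left e3 hKpos.le
        _ ≤ K * (Real.exp K + C1) * τ * |g ξ| := by
          have m1 : 0 ≤ K * |g ξ| * C1 * (τ - 1) :=
            mul_nonneg (mul_nonneg (mul_nonneg hKpos.le (abs_nonneg _)) hC1pos.le) (by linarith)
          have m2 : 0 ≤ K * |g ξ| * Real.exp K * τ :=
            mul_nonneg (mul_nonneg (mul_nonneg hKpos.le (abs_nonneg _)) (Real.exp_pos K).le) hτ.le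
          nlinarith [m1, m2]

lemma deriv_f_flip (u : ℝ) : deriv f (1 - u) = deriv f u := by
  rw [deriv_f_eq, deriv_f_eq]; ring

theorem est_bords (η M : ℝ) (hη : η ∈ Set.Ioo (0:ℝ) (1/4)) (hM : 0 < M) :
    ∃ δ0 > (0:ℝ), ∃ C4 > (0:ℝ), ∀ δ : ℝ, |δ| < δ0 →
      ∀ Y : ℝ → ℝ → ℝ,
        ContDiff ℝ (⊤ : ℕ∞) (fun p : ℝ × ℝ => Y p.1 p.2) →
        (∀ ξ : ℝ, ∀ τ : ℝ, 0 < τ → HasDerivAt (fun t => Y t ξ) (f (Y τ ξ) + δ) τ) →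
        (∀ ξ : ℝ, Y 0 ξ = ξ) →
        ∀ ξ : ℝ,
          (ξ ∈ Set.Icc (1 - η) (1 + M) → ∀ τ : ℝ, 0 < τ →
            Y τ ξ ∈ Set.Icc (1 - η) (1 + M) ∧
            |(deriv f (Y τ ξ) - deriv f ξ) / (f ξ + δ)| ≤ C4 * τ) ∧
          (ξ ∈ Set.Icc (-M) η → ∀ τ : ℝ, 0 < τ →
            Y τ ξ ∈ Set.Icc (-M) η ∧
            |(deriv f (Y τ ξ) - deriv f ξ) / (f ξ + δ)| ≤ C4 * τ) := by
  obtain ⟨δ0, hδ0, C4, hC4, hcore⟩ := core η M hη hM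
  refine ⟨δ0, hδ0, C4, hC4, ?_⟩
  intro δ hδ Y hYsm hY' hY0 ξ
  constructor
  · intro hξ τ hτ
    exact hcore δ hδ Y hYsm hY' hY0 ξ hξ τ hτ
  · intro hξ τ hτ
    set Z : ℝ → ℝ → ℝ := fun t x => 1 - Y t (1 - x) with hZ
    have hZsm : ContDiff ℝ (⊤ : ℕ∞) (fun p : ℝ × ℝ => Z p.1 p.2) := by
      have h1 : ContDiff ℝ (⊤ : ℕ∞) (fun p : ℝ × ℝ => Y p.1 (1 - p.2)) :=
        hYsm.comp (contDiff_fst.prodMk (contDiff_const.sub contDiff_snd))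
      exact contDiff_const.sub h1
    have hZ' : ∀ x τ', 0 < τ' → HasDerivAt (fun t => Z t x) (f (Z τ' x) + (-δ)) τ' := by
      intro x τ' hτ'
      have h1 := (hY' (1 - x) τ' hτ').const_sub 1
      have h2 : f (Z τ' x) + (-δ) = -(f (Y τ' (1 - x)) + δ) := by
        simp only [hZ]
        rw [f_flip]
        ring
      rw [h2]
      exact h1
    have hZ0 : ∀ x, Z 0 x = x := by intro x; simp only [hZ]; rw [hY0]; ring
    have hδ' : |(-δ)| < δ0 := by rwa [abs_neg]
    have hξ' : 1 - ξ ∈ Set.Icc (1 - η) (1 + M) := ⟨by linarith [hξ.2], by linarith [hξ.1]⟩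
    obtain ⟨hmem, hest⟩ := hcore (-δ) hδ' Z hZsm hZ' hZ0 (1 - ξ) hξ' τ hτ
    have hZv : Z τ (1 - ξ) = 1 - Y τ ξ := by simp only [hZ]; norm_num
    constructor
    · rw [hZv] at hmem
      exact ⟨by linarith [hmem.2], by linarith [hmem.1]⟩
    · rw [hZv] at hest
      have e1 : deriv f (1 - Y τ ξ) = deriv f (Y τ ξ) := deriv_f_flip _
      have e2 : deriv f (1 - ξ) = deriv f ξ := deriv_f_flip _
      have e3 : f (1 - ξ) + (-δ) = -(f ξ + δ) := by rw [f_flip]; ring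
      rw [e1, e2, e3] at hest
      rwa [div_neg, abs_neg] at hest
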